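/- The group generated by the five affine maps s₀, s₁, s₂, s₃, s₄ on the hyperplane {ᾱ ∈ ℂ⁵ : α₀+α₁+2α₂+α₃+α₄ = 1} contains, for each i ∈ {0,1,3,4}, a translation t_i shifting α_i by -2 and fixing α_j for j ∈ {0,1,3,4}\{i}. Consequently, the orbit of (α₀, α₁, α₃, α₄) under this group contains the full set (α₀ - 2ℤ) × (α₁ - 2ℤ) × (α₃ - 2ℤ) × (α₄ - 2ℤ). -/

import Mathlib

abbrev P5 := ℂ × ℂ × ℂ × ℂ × ℂ

def ms0 : Function.End P5 :=
  fun p => (-p.1, p.2.1, p.2.2.1 + p.1, p.2.2.2.1, p.2.2.2.2)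
def ms1 : Function.End P5 :=
  fun p => (p.1, -p.2.1, p.2.2.1 + p.2.1, p.2.2.2.1, p.2.2.2.2)
def ms2 : Function.End P5 :=
  fun p => (p.1 + p.2.2.1, p.2.1 + p.2.2.1, -p.2.2.1, p.2.2.2.1 + p.2.2.1, p.2.2.2.2 + p.2.2.1)
def ms3 : Function.End P5 :=
  fun p => (p.1, p.2.1, p.2.2.1 + p.2.2.2.1, -p.2.2.2.1, p.2.2.2.2)
def ms4 : Function.End P5 :=
  fun p => (p.1, p.2.1, p.2.2.1 + p.2.2.2.2, p.2.2.2.1, -p.2.2.2.2)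

/-- Projection to the `(α₀, α₁, α₃, α₄)` coordinates. -/
def projP5 (p : P5) : ℂ × ℂ × ℂ × ℂ := (p.1, p.2.1, p.2.2.2.1, p.2.2.2.2)

/-- The affine relation `α₀ + α₁ + 2α₂ + α₃ + α₄ = 1`. -/
def affRel5 (p : P5) : Prop := p.1 + p.2.1 + 2 * p.2.2.1 + p.2.2.2.1 + p.2.2.2.2 = 1

namespace OkamotoAux

/-- The linear form `α₀ + α₁ + 2α₂ + α₃ + α₄`. -/
def sigma5 (p : P5) : ℂ := p.1 + p.2.1 + 2 * p.2.2.1 + p.2.2.2.1 + p.2.2.2.2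

lemma affRel5_iff (p : P5) : affRel5 p ↔ sigma5 p = 1 := Iff.rfl

lemma sigma5_add_smul (p u : P5) (c : ℂ) (hu : sigma5 u = 0) :
    sigma5 (p + c • u) = sigma5 p := by
  obtain ⟨a0, a1, a2, a3, a4⟩ := p
  obtain ⟨b0, b1, b2, b3, b4⟩ := u
  simp only [sigma5, Prod.mk_add_mk, Prod.smul_mk, smul_eq_mul] at *
  linear_combination c * hu

lemma endMulApply (f g : Function.End P5) (x : P5) : (f * g) x = f (g x) := rfl

/-- the translation words -/
def wt0 : Function.End P5 := ms0*ms2*ms1*ms3*ms4*ms2*ms1*ms3*ms4*ms2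
def wt0i : Function.End P5 := ms2*ms4*ms3*ms1*ms2*ms4*ms3*ms1*ms2*ms0
def wt1 : Function.End P5 := ms1*ms2*ms0*ms3*ms4*ms2*ms0*ms3*ms4*ms2
def wt1i : Function.End P5 := ms2*ms4*ms3*ms0*ms2*ms4*ms3*ms0*ms2*ms1
def wt3 : Function.End P5 := ms3*ms2*ms0*ms1*ms4*ms2*ms0*ms1*ms4*ms2
def wt3i : Function.End P5 := ms2*ms4*ms1*ms0*ms2*ms4*ms1*ms0*ms2*ms3
def wt4 : Function.End P5 := ms4*ms2*ms0*ms1*ms3*ms2*ms0*ms1*ms3*ms2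
def wt4i : Function.End P5 := ms2*ms3*ms1*ms0*ms2*ms3*ms1*ms0*ms2*ms4

def v0 : P5 := (-2, 0, 1, 0, 0)
def v1 : P5 := (0, -2, 1, 0, 0)
def v3 : P5 := (0, 0, 1, -2, 0)
def v4 : P5 := (0, 0, 1, 0, -2)

lemma sv0 : sigma5 v0 = 0 := by simp [sigma5, v0]
lemma sv1 : sigma5 v1 = 0 := by simp [sigma5, v1]
lemma sv3 : sigma5 v3 = 0 := by simp [sigma5, v3]
lemma sv4 : sigma5 v4 = 0 := by simp [sigma5, v4]
lemma snv0 : sigma5 (-v0) = 0 := by simp [sigma5, v0]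
lemma snv1 : sigma5 (-v1) = 0 := by simp [sigma5, v1]
lemma snv3 : sigma5 (-v3) = 0 := by simp [sigma5, v3]
lemma snv4 : sigma5 (-v4) = 0 := by simp [sigma5, v4]


lemma act0 : ∀ p : P5, wt0 p = p + sigma5 p • v0 := by
  rintro ⟨a0, a1, a2, a3, a4⟩
  simp only [wt0, wt0i, wt1, wt1i, wt3, wt3i, wt4, wt4i, v0, v1, v3, v4, sigma5,
    endMulApply, Function.comp_apply, ms0, ms1, ms2, ms3, ms4,
    Prod.mk_add_mk, Prod.smul_mk, smul_eq_mul, Prod.neg_mk, Prod.mk.injEq]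
  refine ⟨by ring, by ring, by ring, by ring, by ring⟩
lemma act0i : ∀ p : P5, wt0i p = p + sigma5 p • (-v0) := by
  rintro ⟨a0, a1, a2, a3, a4⟩
  simp only [wt0, wt0i, wt1, wt1i, wt3, wt3i, wt4, wt4i, v0, v1, v3, v4, sigma5,
    endMulApply, Function.comp_apply, ms0, ms1, ms2, ms3, ms4,
    Prod.mk_add_mk, Prod.smul_mk, smul_eq_mul, Prod.neg_mk, Prod.mk.injEq]
  refine ⟨by ring, by ring, by ring, by ring, by ring⟩
lemma act1 : ∀ p : P5, wt1 p = p + sigma5 p • v1 := by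
  rintro ⟨a0, a1, a2, a3, a4⟩
  simp only [wt0, wt0i, wt1, wt1i, wt3, wt3i, wt4, wt4i, v0, v1, v3, v4, sigma5,
    endMulApply, Function.comp_apply, ms0, ms1, ms2, ms3, ms4,
    Prod.mk_add_mk, Prod.smul_mk, smul_eq_mul, Prod.neg_mk, Prod.mk.injEq]
  refine ⟨by ring, by ring, by ring, by ring, by ring⟩
lemma act1i : ∀ p : P5, wt1i p = p + sigma5 p • (-v1) := by
  rintro ⟨a0, a1, a2, a3, a4⟩
  simp only [wt0, wt0i, wt1, wt1i, wt3, wt3i, wt4, wt4i, v0, v1, v3, v4, sigma5,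
    endMulApply, Function.comp_apply, ms0, ms1, ms2, ms3, ms4,
    Prod.mk_add_mk, Prod.smul_mk, smul_eq_mul, Prod.neg_mk, Prod.mk.injEq]
  refine ⟨by ring, by ring, by ring, by ring, by ring⟩
lemma act3 : ∀ p : P5, wt3 p = p + sigma5 p • v3 := by
  rintro ⟨a0, a1, a2, a3, a4⟩
  simp only [wt0, wt0i, wt1, wt1i, wt3, wt3i, wt4, wt4i, v0, v1, v3, v4, sigma5,
    endMulApply, Function.comp_apply, ms0, ms1, ms2, ms3, ms4,
    Prod.mk_add_mk, Prod.smul_mk, smul_eq_mul, Prod.neg_mk, Prod.mk.injEq]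
  refine ⟨by ring, by ring, by ring, by ring, by ring⟩
lemma act3i : ∀ p : P5, wt3i p = p + sigma5 p • (-v3) := by
  rintro ⟨a0, a1, a2, a3, a4⟩
  simp only [wt0, wt0i, wt1, wt1i, wt3, wt3i, wt4, wt4i, v0, v1, v3, v4, sigma5,
    endMulApply, Function.comp_apply, ms0, ms1, ms2, ms3, ms4,
    Prod.mk_add_mk, Prod.smul_mk, smul_eq_mul, Prod.neg_mk, Prod.mk.injEq]
  refine ⟨by ring, by ring, by ring, by ring, by ring⟩
lemma act4 : ∀ p : P5, wt4 p = p + sigma5 p • v4 := by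
  rintro ⟨a0, a1, a2, a3, a4⟩
  simp only [wt0, wt0i, wt1, wt1i, wt3, wt3i, wt4, wt4i, v0, v1, v3, v4, sigma5,
    endMulApply, Function.comp_apply, ms0, ms1, ms2, ms3, ms4,
    Prod.mk_add_mk, Prod.smul_mk, smul_eq_mul, Prod.neg_mk, Prod.mk.injEq]
  refine ⟨by ring, by ring, by ring, by ring, by ring⟩
lemma act4i : ∀ p : P5, wt4i p = p + sigma5 p • (-v4) := by
  rintro ⟨a0, a1, a2, a3, a4⟩
  simp only [wt0, wt0i, wt1, wt1i, wt3, wt3i, wt4, wt4i, v0, v1, v3, v4, sigma5,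
    endMulApply, Function.comp_apply, ms0, ms1, ms2, ms3, ms4,
    Prod.mk_add_mk, Prod.smul_mk, smul_eq_mul, Prod.neg_mk, Prod.mk.injEq]
  refine ⟨by ring, by ring, by ring, by ring, by ring⟩

lemma pow_shift (w : Function.End P5) (u : P5) (hu : sigma5 u = 0)
    (haw : ∀ p, w p = p + sigma5 p • u) :
    ∀ (n : ℕ) (p : P5), (w ^ n) p = p + ((n : ℂ) * sigma5 p) • u := by
  intro n
  induction n with
  | zero => intro p; simp [Function.End.one_def]
  | succ n ih =>
    intro p
    have h1 : (w ^ (n + 1)) p = (w ^ n) (w p) := by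
      rw [pow_succ]; rfl
    rw [h1, ih, haw, sigma5_add_smul p u (sigma5 p) hu]
    push_cast
    module

def genSet : Set (Function.End P5) := {ms0, ms1, ms2, ms3, ms4}

lemma int_shift (w wi : Function.End P5)
    (hw : w ∈ Submonoid.closure genSet) (hwi : wi ∈ Submonoid.closure genSet)
    (v : P5) (hv : sigma5 v = 0) (hnv : sigma5 (-v) = 0)
    (haw : ∀ p, w p = p + sigma5 p • v) (hawi : ∀ p, wi p = p + sigma5 p • (-v)) (k : ℤ) :
    ∃ g ∈ Submonoid.closure genSet, ∀ p : P5, g p = p + ((k : ℂ) * sigma5 p) • v := by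
  obtain ⟨n, rfl | rfl⟩ := k.eq_nat_or_neg
  · exact ⟨w ^ n, pow_mem hw n, fun p => by
      rw [pow_shift w v hv haw n p]; push_cast; ring_nf⟩
  · refine ⟨wi ^ n, pow_mem hwi n, fun p => ?_⟩
    rw [pow_shift wi (-v) hnv hawi n p]
    push_cast
    module

lemma mem0 : ms0 ∈ Submonoid.closure genSet := Submonoid.subset_closure (by simp [genSet])
lemma mem1 : ms1 ∈ Submonoid.closure genSet := Submonoid.subset_closure (by simp [genSet])
lemma mem2 : ms2 ∈ Submonoid.closure genSet := Submonoid.subset_closure (by simp [genSet])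
lemma mem3 : ms3 ∈ Submonoid.closure genSet := Submonoid.subset_closure (by simp [genSet])
lemma mem4 : ms4 ∈ Submonoid.closure genSet := Submonoid.subset_closure (by simp [genSet])


lemma memt0 : wt0 ∈ Submonoid.closure genSet := by
  simp only [wt0, wt0i, wt1, wt1i, wt3, wt3i, wt4, wt4i]
  repeat' apply mul_mem
  all_goals first | exact mem0 | exact mem1 | exact mem2 | exact mem3 | exact mem4
lemma memt0i : wt0i ∈ Submonoid.closure genSet := by
  simp only [wt0, wt0i, wt1, wt1i, wt3, wt3i, wt4, wt4i]
  repeat' apply mul_mem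
  all_goals first | exact mem0 | exact mem1 | exact mem2 | exact mem3 | exact mem4
lemma memt1 : wt1 ∈ Submonoid.closure genSet := by
  simp only [wt0, wt0i, wt1, wt1i, wt3, wt3i, wt4, wt4i]
  repeat' apply mul_mem
  all_goals first | exact mem0 | exact mem1 | exact mem2 | exact mem3 | exact mem4
lemma memt1i : wt1i ∈ Submonoid.closure genSet := by
  simp only [wt0, wt0i, wt1, wt1i, wt3, wt3i, wt4, wt4i]
  repeat' apply mul_mem
  all_goals first | exact mem0 | exact mem1 | exact mem2 | exact mem3 | exact mem4
lemma memt3 : wt3 ∈ Submonoid.closure genSet := by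
  simp only [wt0, wt0i, wt1, wt1i, wt3, wt3i, wt4, wt4i]
  repeat' apply mul_mem
  all_goals first | exact mem0 | exact mem1 | exact mem2 | exact mem3 | exact mem4
lemma memt3i : wt3i ∈ Submonoid.closure genSet := by
  simp only [wt0, wt0i, wt1, wt1i, wt3, wt3i, wt4, wt4i]
  repeat' apply mul_mem
  all_goals first | exact mem0 | exact mem1 | exact mem2 | exact mem3 | exact mem4
lemma memt4 : wt4 ∈ Submonoid.closure genSet := by
  simp only [wt0, wt0i, wt1, wt1i, wt3, wt3i, wt4, wt4i]
  repeat' apply mul_mem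
  all_goals first | exact mem0 | exact mem1 | exact mem2 | exact mem3 | exact mem4
lemma memt4i : wt4i ∈ Submonoid.closure genSet := by
  simp only [wt0, wt0i, wt1, wt1i, wt3, wt3i, wt4, wt4i]
  repeat' apply mul_mem
  all_goals first | exact mem0 | exact mem1 | exact mem2 | exact mem3 | exact mem4

end OkamotoAux

open OkamotoAux
/-- The group (here: monoid, which coincides since all generators are involutions) generated by
`s₀,…,s₄` contains, for each `i ∈ {0,1,3,4}`, a translation shifting `α_i` by `-2` and fixing the
other coordinates among `α₀,α₁,α₃,α₄`; consequently the orbit of `(α₀,α₁,α₃,α₄)` contains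
`(α₀-2ℤ) × (α₁-2ℤ) × (α₃-2ℤ) × (α₄-2ℤ)`. -/
theorem okamoto_translations_and_orbit :
    (∃ t0 ∈ Submonoid.closure {ms0, ms1, ms2, ms3, ms4}, ∀ p : P5, affRel5 p →
        projP5 (t0 p) = (p.1 - 2, p.2.1, p.2.2.2.1, p.2.2.2.2)) ∧
    (∃ t1 ∈ Submonoid.closure {ms0, ms1, ms2, ms3, ms4}, ∀ p : P5, affRel5 p →
        projP5 (t1 p) = (p.1, p.2.1 - 2, p.2.2.2.1, p.2.2.2.2)) ∧
    (∃ t3 ∈ Submonoid.closure {ms0, ms1, ms2, ms3, ms4}, ∀ p : P5, affRel5 p →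
        projP5 (t3 p) = (p.1, p.2.1, p.2.2.2.1 - 2, p.2.2.2.2)) ∧
    (∃ t4 ∈ Submonoid.closure {ms0, ms1, ms2, ms3, ms4}, ∀ p : P5, affRel5 p →
        projP5 (t4 p) = (p.1, p.2.1, p.2.2.2.1, p.2.2.2.2 - 2)) ∧
    (∀ p : P5, affRel5 p → ∀ k0 k1 k3 k4 : ℤ,
      ∃ g ∈ Submonoid.closure {ms0, ms1, ms2, ms3, ms4},
        projP5 (g p) = (p.1 - 2 * k0, p.2.1 - 2 * k1,
          p.2.2.2.1 - 2 * k3, p.2.2.2.2 - 2 * k4)) := by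
  have hset : ({ms0, ms1, ms2, ms3, ms4} : Set (Function.End P5)) = genSet := rfl
  rw [hset]
  refine ⟨⟨wt0, memt0, ?_⟩, ⟨wt1, memt1, ?_⟩, ⟨wt3, memt3, ?_⟩, ⟨wt4, memt4, ?_⟩, ?_⟩
  · intro p hp
    rw [act0 p, (affRel5_iff p).mp hp]
    obtain ⟨a0, a1, a2, a3, a4⟩ := p
    simp [projP5, v0, Prod.mk_add_mk, Prod.smul_mk]
    ring
  · intro p hp
    rw [act1 p, (affRel5_iff p).mp hp]
    obtain ⟨a0, a1, a2, a3, a4⟩ := p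
    simp [projP5, v1, Prod.mk_add_mk, Prod.smul_mk]
    ring
  · intro p hp
    rw [act3 p, (affRel5_iff p).mp hp]
    obtain ⟨a0, a1, a2, a3, a4⟩ := p
    simp [projP5, v3, Prod.mk_add_mk, Prod.smul_mk]
    ring
  · intro p hp
    rw [act4 p, (affRel5_iff p).mp hp]
    obtain ⟨a0, a1, a2, a3, a4⟩ := p
    simp [projP5, v4, Prod.mk_add_mk, Prod.smul_mk]
    ring
  · intro p hp k0 k1 k3 k4
    obtain ⟨g0, hg0M, hg0⟩ := int_shift wt0 wt0i memt0 memt0i v0 sv0 snv0 act0 act0i k0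
    obtain ⟨g1, hg1M, hg1⟩ := int_shift wt1 wt1i memt1 memt1i v1 sv1 snv1 act1 act1i k1
    obtain ⟨g3, hg3M, hg3⟩ := int_shift wt3 wt3i memt3 memt3i v3 sv3 snv3 act3 act3i k3
    obtain ⟨g4, hg4M, hg4⟩ := int_shift wt4 wt4i memt4 memt4i v4 sv4 snv4 act4 act4i k4
    refine ⟨g4 * g3 * g1 * g0, mul_mem (mul_mem (mul_mem hg4M hg3M) hg1M) hg0M, ?_⟩
    have hσ : sigma5 p = 1 := (affRel5_iff p).mp hp
    have e0 : (g4 * g3 * g1 * g0) p = g4 (g3 (g1 (g0 p))) := rfl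
    have h0 := hg0 p
    have σ0 : sigma5 (g0 p) = 1 := by
      rw [h0, sigma5_add_smul p v0 _ sv0, hσ]
    have h1 := hg1 (g0 p)
    have σ1 : sigma5 (g1 (g0 p)) = 1 := by
      rw [h1, sigma5_add_smul _ v1 _ sv1, σ0]
    have h3 := hg3 (g1 (g0 p))
    have σ3 : sigma5 (g3 (g1 (g0 p))) = 1 := by
      rw [h3, sigma5_add_smul _ v3 _ sv3, σ1]
    have h4 := hg4 (g3 (g1 (g0 p)))
    rw [e0, h4, σ3, h3, σ1, h1, σ0, h0, hσ]
    obtain ⟨a0, a1, a2, a3, a4⟩ := p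
    simp only [projP5, v0, v1, v3, v4, Prod.mk_add_mk, Prod.smul_mk, smul_eq_mul,
      Prod.mk.injEq]
    refine ⟨by ring, by ring, by ring, by ring⟩
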